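/- arXiv:2211.12980 — 4 statements merged into one kernel-verified Lean document; each statement's English description precedes it below -/
import Mathlib

section
/- Suppose that for each i ∈ {1,...,K} and each j ≠ i there are constants Q_{ij}, q_{ij} > 0 such that P(W_{ij}(n) ≥ x) ≤ Q_{ij} e^{−q_{ij} x} for all n ∈ ℕ and x ≥ 0. Define the stopping time τ = inf{n ≥ 1 : ∃ i, min_{j≠i} W_{ij}(n) ≥ h}. Then E[τ] ≥ (1/2) · (∑_{i=1}^K min_{j≠i} Q_{ij} e^{−q_{ij} h})^{−1}. -/
open MeasureTheory
open scoped ENNReal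

theorem stmt_10 {Ω : Type*} [MeasurableSpace Ω] (μ : Measure Ω) [IsProbabilityMeasure μ]
    (K : ℕ) (hK : 2 ≤ K)
    (W : Fin K → Fin K → ℕ → Ω → ℝ) (Q q : Fin K → Fin K → ℝ)
    (hQ : ∀ i j, j ≠ i → 0 < Q i j) (hq : ∀ i j, j ≠ i → 0 < q i j)
    (h : ℝ) (hh : 0 < h)
    (htail : ∀ i j, j ≠ i → ∀ n : ℕ, 1 ≤ n → ∀ x : ℝ, 0 ≤ x →
      (μ {ω | x ≤ W i j n ω}).toReal ≤ Q i j * Real.exp (-(q i j * x)))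
    (τ : Ω → ℕ∞)
    (hτ : ∀ ω, ∀ n : ℕ, ((n : ℕ∞) < τ ω ↔
      ∀ m ∈ Finset.Icc 1 n, ¬ ∃ i, ∀ j, j ≠ i → h ≤ W i j m ω)) :
    ENNReal.ofReal
        ((1 / 2) *
          (∑ i : Fin K,
              sInf {y : ℝ | ∃ j, j ≠ i ∧ y = Q i j * Real.exp (-(q i j * h))})⁻¹) ≤
      ∑' n : ℕ, μ {ω | (n : ℕ∞) < τ ω} := by
  classical
  set c : Fin K → ℝ := fun i => sInf {y : ℝ | ∃ j, j ≠ i ∧ y = Q i j * Real.exp (-(q i j * h))}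
    with hcdef
  have hwit : ∀ i : Fin K, ∃ j, j ≠ i ∧ c i = Q i j * Real.exp (-(q i j * h)) := by
    intro i
    have hcard : 1 < Fintype.card (Fin K) := by simpa using (show 1 < K by omega)
    obtain ⟨j₀, hj₀⟩ := Fintype.exists_ne_of_one_lt_card hcard i
    have hne : {y : ℝ | ∃ j, j ≠ i ∧ y = Q i j * Real.exp (-(q i j * h))}.Nonempty :=
      ⟨_, j₀, hj₀, rfl⟩
    have hfin : {y : ℝ | ∃ j, j ≠ i ∧ y = Q i j * Real.exp (-(q i j * h))}.Finite := by
      apply Set.Finite.subset (Set.finite_range (fun j => Q i j * Real.exp (-(q i j * h))))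
      rintro y ⟨j, _, rfl⟩
      exact ⟨j, rfl⟩
    exact hne.csInf_mem hfin
  choose jj hjj hcval using hwit
  have hcpos : ∀ i, 0 < c i := by
    intro i
    rw [hcval i]
    exact mul_pos (hQ i (jj i) (hjj i)) (Real.exp_pos _)
  set S : ℝ := ∑ i : Fin K, c i with hSdef
  have hSpos : 0 < S :=
    Finset.sum_pos (fun i _ => hcpos i) ⟨⟨0, by omega⟩, Finset.mem_univ _⟩
  -- union bound on the complement
  have hcomp : ∀ n : ℕ, μ {ω | ¬ ((n : ℕ∞) < τ ω)} ≤ ENNReal.ofReal (n * S) := by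
    intro n
    have hsub : {ω | ¬ ((n : ℕ∞) < τ ω)} ⊆
        ⋃ m ∈ Finset.Icc 1 n, ⋃ i : Fin K, {ω | h ≤ W i (jj i) m ω} := by
      intro ω hω
      rw [Set.mem_setOf_eq, hτ ω n] at hω
      push_neg at hω
      obtain ⟨m, hm, i, hi⟩ := hω
      exact Set.mem_biUnion hm (Set.mem_iUnion.2 ⟨i, hi (jj i) (hjj i)⟩)
    have hA : ∀ m ∈ Finset.Icc 1 n, ∀ i : Fin K,
        μ {ω | h ≤ W i (jj i) m ω} ≤ ENNReal.ofReal (c i) := by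
      intro m hm i
      have h1m : 1 ≤ m := (Finset.mem_Icc.1 hm).1
      have htr := htail i (jj i) (hjj i) m h1m h hh.le
      rw [hcval i]
      rw [← ENNReal.ofReal_toReal (measure_ne_top μ _)]
      exact ENNReal.ofReal_le_ofReal htr
    calc μ {ω | ¬ ((n : ℕ∞) < τ ω)}
        ≤ μ (⋃ m ∈ Finset.Icc 1 n, ⋃ i : Fin K, {ω | h ≤ W i (jj i) m ω}) :=
          measure_mono hsub
      _ ≤ ∑ m ∈ Finset.Icc 1 n, μ (⋃ i : Fin K, {ω | h ≤ W i (jj i) m ω}) :=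
          measure_biUnion_finset_le _ _
      _ ≤ ∑ m ∈ Finset.Icc 1 n, ∑ i : Fin K, μ {ω | h ≤ W i (jj i) m ω} :=
          Finset.sum_le_sum fun m _ => measure_iUnion_fintype_le _ _
      _ ≤ ∑ m ∈ Finset.Icc 1 n, ∑ i : Fin K, ENNReal.ofReal (c i) :=
          Finset.sum_le_sum fun m hm => Finset.sum_le_sum fun i _ => hA m hm i
      _ = ENNReal.ofReal (n * S) := by
          rw [← ENNReal.ofReal_sum_of_nonneg (fun i _ => (hcpos i).le), Finset.sum_const,
            Nat.card_Icc]
          simp only [Nat.add_sub_cancel, nsmul_eq_mul]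
          rw [← ENNReal.ofReal_natCast n, ← ENNReal.ofReal_mul (Nat.cast_nonneg n)]
  -- lower bound for each n
  have hlow : ∀ n : ℕ, ENNReal.ofReal (1 - n * S) ≤ μ {ω | (n : ℕ∞) < τ ω} := by
    intro n
    have hone : (1 : ℝ≥0∞) ≤ μ {ω | (n : ℕ∞) < τ ω} + μ {ω | ¬ ((n : ℕ∞) < τ ω)} := by
      have : (1 : ℝ≥0∞) = μ Set.univ := (measure_univ).symm
      rw [this]
      have hu : (Set.univ : Set Ω) ⊆ {ω | (n : ℕ∞) < τ ω} ∪ {ω | ¬ ((n : ℕ∞) < τ ω)} := by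
        intro ω _
        by_cases hx : (n : ℕ∞) < τ ω
        · exact Or.inl hx
        · exact Or.inr hx
      exact (measure_mono hu).trans (measure_union_le _ _)
    have h2 : (1 : ℝ≥0∞) ≤ μ {ω | (n : ℕ∞) < τ ω} + ENNReal.ofReal (n * S) :=
      hone.trans (add_le_add le_rfl (hcomp n))
    have h3 : ENNReal.ofReal (1 - n * S) = 1 - ENNReal.ofReal (n * S) := by
      rw [ENNReal.ofReal_sub _ (by positivity), ENNReal.ofReal_one]
    rw [h3]
    exact tsub_le_iff_right.2 h2
  -- choose N
  set N : ℕ := ⌈S⁻¹⌉₊ with hN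
  have hNa : S⁻¹ ≤ (N : ℝ) := Nat.le_ceil _
  have hNb : (N : ℝ) < S⁻¹ + 1 := Nat.ceil_lt_add_one (by positivity)
  have gauss : ∀ m : ℕ, (∑ n ∈ Finset.range m, (n : ℝ)) = m * (m - 1) / 2 := by
    intro m
    induction m with
    | zero => simp
    | succ k ih => rw [Finset.sum_range_succ, ih]; push_cast; ring
  have hterm : ∀ n ∈ Finset.range N, (0 : ℝ) ≤ 1 - n * S := by
    intro n hn
    have hn' : (n : ℝ) ≤ (N : ℝ) - 1 := by
      have : n + 1 ≤ N := Finset.mem_range.1 hn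
      have : ((n : ℝ) + 1) ≤ N := by exact_mod_cast this
      linarith
    have : (n : ℝ) * S ≤ (S⁻¹) * S := by
      apply mul_le_mul_of_nonneg_right _ hSpos.le
      linarith
    rw [inv_mul_cancel₀ hSpos.ne'] at this
    linarith
  have hkey : (1 / 2) * S⁻¹ ≤ ∑ n ∈ Finset.range N, (1 - (n : ℝ) * S) := by
    have hsum : (∑ n ∈ Finset.range N, (1 - (n : ℝ) * S))
        = N - S * (N * (N - 1) / 2) := by
      rw [Finset.sum_sub_distrib, Finset.sum_const, ← Finset.sum_mul, gauss,
        Finset.card_range]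
      push_cast
      ring
    rw [hsum]
    have hSN : S * ((N : ℝ) - 1) < 1 := by
      have : S * ((N : ℝ) - 1) < S * S⁻¹ := by
        apply mul_lt_mul_of_pos_left _ hSpos
        linarith
      rwa [mul_inv_cancel₀ hSpos.ne'] at this
    have hN1 : (1 : ℝ) ≤ N := by
      have : (0 : ℝ) < S⁻¹ := by positivity
      have := hNa
      have hN0 : 0 < N := by
        by_contra hcon
        push_neg at hcon
        interval_cases N
        simp at this
        linarith
      exact_mod_cast hN0
    have hmul : (N : ℝ) * (S * ((N : ℝ) - 1)) ≤ (N : ℝ) * 1 :=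
      mul_le_mul_of_nonneg_left hSN.le (by linarith)
    nlinarith [hmul, hNa, hN1]
  -- final chain
  calc ENNReal.ofReal ((1 / 2) * (∑ i : Fin K,
          sInf {y : ℝ | ∃ j, j ≠ i ∧ y = Q i j * Real.exp (-(q i j * h))})⁻¹)
      = ENNReal.ofReal ((1 / 2) * S⁻¹) := by rw [hSdef]
    _ ≤ ENNReal.ofReal (∑ n ∈ Finset.range N, (1 - (n : ℝ) * S)) :=
        ENNReal.ofReal_le_ofReal hkey
    _ = ∑ n ∈ Finset.range N, ENNReal.ofReal (1 - (n : ℝ) * S) :=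
        ENNReal.ofReal_sum_of_nonneg hterm
    _ ≤ ∑ n ∈ Finset.range N, μ {ω | (n : ℕ∞) < τ ω} :=
        Finset.sum_le_sum fun n _ => hlow n
    _ ≤ ∑' n : ℕ, μ {ω | (n : ℕ∞) < τ ω} := ENNReal.sum_le_tsum _
end

section
/- Let (ℓ_i(n)) and (ℓ_{ij}(n)) be i.i.d. sequences (jointly, as functions of i.i.d. observations) with I_i = E[ℓ_i(1)] > 0 and I_{ij} = E[ℓ_{ij}(1)] > 0. Let Y_i(n) = max_{0≤k≤n} ∑_{u=k+1}^n ℓ_i(u) and suppose W_{ij}(n) are statistics satisfying ∑_{n=1}^∞ P(W_{ij}(n) ≤ ρn) < ∞ for all ρ < I_{ij} and all j ≠ i. Define τ_i(b,h) = inf{n ≥ 1 : Y_i(n) ≥ b and W_{ij}(n) ≥ h for all j ≠ i}. Then for every δ > 0 there exists a constant C_δ > 0, independent of b and h, such that E[τ_i(b,h)] ≤ (1+δ)·max(b/I_i, h/I*_i) + C_δ for all b, h ≥ 0, where I*_i = min_{j≠i} I_{ij}. -/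
open MeasureTheory ProbabilityTheory Finset

set_option maxHeartbeats 1000000

lemma exp_le_quad (x : ℝ) : Real.exp x ≤ 1 + x + x ^ 2 * Real.exp |x| := by
  rcases le_or_gt |x| 1 with h | h
  · have h2 := Real.abs_exp_sub_one_sub_id_le h
    have h3 : Real.exp x - 1 - x ≤ x ^ 2 := (abs_le.1 h2).2
    have h4 : (1:ℝ) ≤ Real.exp |x| := Real.one_le_exp (abs_nonneg x)
    nlinarith [sq_nonneg x]
  · rcases le_or_gt 0 x with hx | hx
    · -- x > 1 : exp x * (1 - x^2) ≤ 1 + x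
      have h1 : 1 < x := by rwa [abs_of_nonneg hx] at h
      have : |x| = x := abs_of_nonneg hx
      rw [this]
      have h5 : Real.exp x ≤ x ^ 2 * Real.exp x :=
        le_mul_of_one_le_left (Real.exp_pos x).le (by nlinarith)
      linarith
    · -- x < -1 : exp x ≤ 1, and -x ≤ x^2 ≤ x^2 exp|x|
      have h1 : x < -1 := by rw [abs_of_neg hx] at h; linarith
      have h2 : Real.exp x ≤ 1 := Real.exp_le_one_iff.2 hx.le
      have h4 : (1:ℝ) ≤ Real.exp |x| := Real.one_le_exp (abs_nonneg x)
      nlinarith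

lemma sq_le_exp_half {c y : ℝ} (hc : 0 < c) (hy : 0 ≤ y) :
    y ^ 2 ≤ 16 / c ^ 2 * Real.exp (c / 2 * y) := by
  have hz : 0 ≤ c / 2 * y := by positivity
  have h2 : (c / 2 * y) ^ 2 / 4 ≤ Real.exp (c / 2 * y) := by
    set z := c / 2 * y with hzdef
    have he : Real.exp z = Real.exp (z / 2) * Real.exp (z / 2) := by
      rw [← Real.exp_add]; ring_nf
    have h3 := Real.add_one_le_exp (z / 2)
    nlinarith [Real.exp_pos (z / 2)]
  have hc2 : (0:ℝ) < c ^ 2 := by positivity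
  rw [div_mul_eq_mul_div, le_div_iff₀ hc2]
  nlinarith

open MeasureTheory ProbabilityTheory in
lemma mgf_le_quad {Ω : Type*} [MeasurableSpace Ω] (μ : Measure Ω) [IsProbabilityMeasure μ]
    (X : Ω → ℝ) (hm : Measurable X) (hint : Integrable X μ)
    {ε : ℝ} (hε : 0 < ε)
    (hmgf : ∀ θ : ℝ, |θ| ≤ ε → Integrable (fun ω => Real.exp (θ * X ω)) μ)
    (t : ℝ) (ht : |t| ≤ ε / 2) :
    mgf X μ t ≤ Real.exp (t * (∫ ω, X ω ∂μ) +
      (16 / ε ^ 2 * ((∫ ω, Real.exp (ε * X ω) ∂μ) + ∫ ω, Real.exp (-ε * X ω) ∂μ)) * t ^ 2) := by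
  set G : Ω → ℝ := fun ω => Real.exp (ε * X ω) + Real.exp (-ε * X ω) with hG
  have hGint : Integrable G μ :=
    (hmgf ε (by rw [abs_of_pos hε])).add (hmgf (-ε) (by rw [abs_neg, abs_of_pos hε]))
  have hGpt : ∀ ω, X ω ^ 2 * Real.exp |t * X ω| ≤ 16 / ε ^ 2 * G ω := by
    intro ω
    have habs : |t * X ω| ≤ ε / 2 * |X ω| := by
      rw [abs_mul]; exact mul_le_mul_of_nonneg_right ht (abs_nonneg _)
    have hsq : X ω ^ 2 ≤ 16 / ε ^ 2 * Real.exp (ε / 2 * |X ω|) :=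
      (sq_abs (X ω)) ▸ sq_le_exp_half hε (abs_nonneg _)
    have hee : Real.exp |t * X ω| ≤ Real.exp (ε / 2 * |X ω|) := Real.exp_le_exp.2 habs
    have hG2 : Real.exp (ε / 2 * |X ω|) * Real.exp (ε / 2 * |X ω|) ≤ G ω := by
      rw [← Real.exp_add]
      have h' : ε / 2 * |X ω| + ε / 2 * |X ω| = ε * |X ω| := by ring
      rw [h']
      rcases le_or_gt 0 (X ω) with hx | hx
      · rw [abs_of_nonneg hx]
        exact le_add_of_nonneg_right (Real.exp_pos _).le
      · rw [abs_of_neg hx, show ε * -X ω = -ε * X ω from by ring]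
        exact le_add_of_nonneg_left (Real.exp_pos _).le
    calc X ω ^ 2 * Real.exp |t * X ω|
        ≤ (16 / ε ^ 2 * Real.exp (ε / 2 * |X ω|)) * Real.exp (ε / 2 * |X ω|) :=
          mul_le_mul hsq hee (Real.exp_pos _).le (by positivity)
      _ = 16 / ε ^ 2 * (Real.exp (ε / 2 * |X ω|) * Real.exp (ε / 2 * |X ω|)) := by ring
      _ ≤ 16 / ε ^ 2 * G ω := mul_le_mul_of_nonneg_left hG2 (by positivity)
  have hpt : ∀ ω, Real.exp (t * X ω) ≤ 1 + t * X ω + t ^ 2 * (16 / ε ^ 2 * G ω) := by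
    intro ω
    have h1 := exp_le_quad (t * X ω)
    have h2 : (t * X ω) ^ 2 * Real.exp |t * X ω| ≤ t ^ 2 * (16 / ε ^ 2 * G ω) := by
      calc (t * X ω) ^ 2 * Real.exp |t * X ω|
          = t ^ 2 * (X ω ^ 2 * Real.exp |t * X ω|) := by ring
        _ ≤ t ^ 2 * (16 / ε ^ 2 * G ω) :=
            mul_le_mul_of_nonneg_left (hGpt ω) (sq_nonneg t)
    linarith
  have hεt : |t| ≤ ε := ht.trans (by linarith)
  have hlhs : Integrable (fun ω => Real.exp (t * X ω)) μ := hmgf t hεt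
  have i1 : Integrable (fun ω => 1 + t * X ω) μ := by
    exact (integrable_const 1).add (hint.const_mul t)
  have i2 : Integrable (fun ω => t ^ 2 * (16 / ε ^ 2 * G ω)) μ := by
    exact (hGint.const_mul _).const_mul _
  have hrhs : Integrable (fun ω => 1 + t * X ω + t ^ 2 * (16 / ε ^ 2 * G ω)) μ := by
    exact i1.add i2
  have hmono := integral_mono hlhs hrhs hpt
  have heval : (∫ ω, (1 + t * X ω + t ^ 2 * (16 / ε ^ 2 * G ω)) ∂μ)
      = 1 + t * (∫ ω, X ω ∂μ) + (16 / ε ^ 2 * ((∫ ω, Real.exp (ε * X ω) ∂μ)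
        + ∫ ω, Real.exp (-ε * X ω) ∂μ)) * t ^ 2 := by
    rw [integral_add i1 i2,
      integral_add (integrable_const 1) (hint.const_mul t), integral_const,
      integral_const_mul, integral_const_mul, integral_const_mul, hG,
      integral_add (hmgf ε (by rw [abs_of_pos hε])) (hmgf (-ε) (by rw [abs_neg, abs_of_pos hε]))]
    simp [measure_univ]
    ring
  rw [mgf]
  refine hmono.trans ?_
  rw [heval]
  have := Real.add_one_le_exp (t * (∫ ω, X ω ∂μ) + (16 / ε ^ 2 * ((∫ ω, Real.exp (ε * X ω) ∂μ)
    + ∫ ω, Real.exp (-ε * X ω) ∂μ)) * t ^ 2)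
  linarith

open MeasureTheory ProbabilityTheory Finset in
lemma chernoff_bound {Ω : Type*} [MeasurableSpace Ω] (μ : Measure Ω) [IsProbabilityMeasure μ]
    (ℓ : ℕ → Ω → ℝ) (hmeas : ∀ n, Measurable (ℓ n))
    (hindep : iIndepFun ℓ μ)
    (hident : ∀ n, IdentDistrib (ℓ n) (ℓ 1) μ μ)
    (hint : Integrable (ℓ 1) μ)
    (I : ℝ) (hI : I = ∫ ω, ℓ 1 ω ∂μ)
    {ε : ℝ} (hε : 0 < ε)
    (hmgfε : ∀ θ : ℝ, |θ| ≤ ε → Integrable (fun ω => Real.exp (θ * ℓ 1 ω)) μ)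
    (ρ : ℝ) (hρ : ρ < I) :
    ∃ c > (0 : ℝ), ∀ n : ℕ,
      μ {ω | ∑ u ∈ Finset.Icc 1 n, ℓ u ω ≤ ρ * n} ≤ ENNReal.ofReal (Real.exp (-(c * n))) := by
  set A1 := ∫ ω, Real.exp (ε * ℓ 1 ω) ∂μ with hA1
  set A2 := ∫ ω, Real.exp (-ε * ℓ 1 ω) ∂μ with hA2
  set M := 16 / ε ^ 2 * (A1 + A2) with hM
  have hGint : Integrable (fun ω => Real.exp (ε * ℓ 1 ω) + Real.exp (-ε * ℓ 1 ω)) μ :=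
    (hmgfε ε (by rw [abs_of_pos hε])).add (hmgfε (-ε) (by rw [abs_neg, abs_of_pos hε]))
  have hA : 2 ≤ A1 + A2 := by
    have hpt : ∀ ω, (2:ℝ) ≤ Real.exp (ε * ℓ 1 ω) + Real.exp (-ε * ℓ 1 ω) := by
      intro ω
      have hmul : Real.exp (ε * ℓ 1 ω) * Real.exp (-ε * ℓ 1 ω) = 1 := by
        rw [← Real.exp_add]; simp
      nlinarith [Real.exp_pos (ε * ℓ 1 ω), Real.exp_pos (-ε * ℓ 1 ω),
        sq_nonneg (Real.exp (ε * ℓ 1 ω) - 1)]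
    calc (2:ℝ) = ∫ _ω, (2:ℝ) ∂μ := by simp
      _ ≤ ∫ ω, (Real.exp (ε * ℓ 1 ω) + Real.exp (-ε * ℓ 1 ω)) ∂μ :=
          integral_mono (integrable_const 2) hGint hpt
      _ = A1 + A2 := integral_add (hmgfε ε (by rw [abs_of_pos hε]))
          (hmgfε (-ε) (by rw [abs_neg, abs_of_pos hε]))
  have hMpos : 0 < M := by
    rw [hM]
    have h16 : (0:ℝ) < 16 / ε ^ 2 := by positivity
    nlinarith
  set t₀ := min ((I - ρ) / (2 * M)) (ε / 2) with ht₀def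
  have ht₀ : 0 < t₀ := lt_min (div_pos (by linarith) (by linarith)) (by positivity)
  set t := -t₀ with htdef
  have habs : |t| ≤ ε / 2 := by
    rw [htdef, abs_neg, abs_of_pos ht₀]; exact min_le_right _ _
  have habsε : |t| ≤ ε := habs.trans (by linarith)
  set c := t₀ * (I - ρ) / 2 with hcdef
  have hc : 0 < c := by
    rw [hcdef]; have : 0 < I - ρ := by linarith
    positivity
  have hkey : t * (I - ρ) + M * t ^ 2 ≤ -c := by
    have h1 : t₀ ≤ (I - ρ) / (2 * M) := min_le_left _ _
    have hMne : M ≠ 0 := hMpos.ne'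
    have h2 : M * t₀ ≤ (I - ρ) / 2 := by
      calc M * t₀ ≤ M * ((I - ρ) / (2 * M)) := mul_le_mul_of_nonneg_left h1 hMpos.le
        _ = (I - ρ) / 2 := by field_simp
    have : M * t₀ ^ 2 ≤ t₀ * (I - ρ) / 2 := by nlinarith
    rw [htdef, hcdef]; nlinarith
  -- mgf bound for a single variable
  have hmgf1 : mgf (ℓ 1) μ t ≤ Real.exp (t * I + M * t ^ 2) := by
    have h := mgf_le_quad μ (ℓ 1) (hmeas 1) hint hε hmgfε t habs
    rw [← hA1, ← hA2, ← hM, ← hI] at h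
    exact h
  have hmgfint : ∀ u : ℕ, Integrable (fun ω => Real.exp (t * ℓ u ω)) μ := by
    intro u
    have hcomp : IdentDistrib (fun ω => Real.exp (t * ℓ u ω))
        (fun ω => Real.exp (t * ℓ 1 ω)) μ μ :=
      (hident u).comp (Real.measurable_exp.comp (measurable_id.const_mul t))
    exact hcomp.integrable_iff.2 (hmgfε t habsε)
  have hmgfeq : ∀ u : ℕ, mgf (ℓ u) μ t = mgf (ℓ 1) μ t := by
    intro u
    have hcomp : IdentDistrib (fun ω => Real.exp (t * ℓ u ω))
        (fun ω => Real.exp (t * ℓ 1 ω)) μ μ :=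
      (hident u).comp (Real.measurable_exp.comp (measurable_id.const_mul t))
    exact hcomp.integral_eq
  refine ⟨c, hc, fun n => ?_⟩
  have hmark := measure_le_le_exp_mul_mgf (μ := μ) (X := ∑ u ∈ Finset.Icc 1 n, ℓ u)
    (ρ * n) (by rw [htdef]; linarith) (hindep.integrable_exp_mul_sum hmeas (fun u _ => hmgfint u))
  have hset : {ω | (∑ u ∈ Finset.Icc 1 n, ℓ u) ω ≤ ρ * n}
      = {ω | ∑ u ∈ Finset.Icc 1 n, ℓ u ω ≤ ρ * n} := by
    simp [Finset.sum_apply]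
  rw [hset] at hmark
  have hmgfsum : mgf (∑ u ∈ Finset.Icc 1 n, ℓ u) μ t = (mgf (ℓ 1) μ t) ^ n := by
    rw [hindep.mgf_sum hmeas]
    rw [Finset.prod_congr rfl (fun u _ => hmgfeq u), Finset.prod_const, Nat.card_Icc]
    simp
  rw [hmgfsum] at hmark
  have hbound : Real.exp (-t * (ρ * n)) * (mgf (ℓ 1) μ t) ^ n ≤ Real.exp (-(c * n)) := by
    have h1 : (mgf (ℓ 1) μ t) ^ n ≤ Real.exp (t * I + M * t ^ 2) ^ n :=
      pow_le_pow_left₀ mgf_nonneg hmgf1 n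
    calc Real.exp (-t * (ρ * n)) * (mgf (ℓ 1) μ t) ^ n
        ≤ Real.exp (-t * (ρ * n)) * Real.exp (t * I + M * t ^ 2) ^ n := by
          exact mul_le_mul_of_nonneg_left h1 (Real.exp_pos _).le
      _ = Real.exp ((-t * ρ + (t * I + M * t ^ 2)) * n) := by
          rw [← Real.exp_nat_mul, ← Real.exp_add]; ring_nf
      _ ≤ Real.exp (-(c * n)) := by
          apply Real.exp_le_exp.2
          have : -t * ρ + (t * I + M * t ^ 2) = t * (I - ρ) + M * t ^ 2 := by ring
          rw [this]
          calc (t * (I - ρ) + M * t ^ 2) * n ≤ -c * n := by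
                apply mul_le_mul_of_nonneg_right hkey (Nat.cast_nonneg n)
            _ = -(c * n) := by ring
  rw [← ENNReal.ofReal_toReal (measure_ne_top μ _)]
  exact ENNReal.ofReal_le_ofReal (hmark.trans hbound)


theorem stmt_11 {Ω : Type*} [MeasurableSpace Ω] (μ : Measure Ω) [IsProbabilityMeasure μ]
    (K : ℕ) (hK : 2 ≤ K) (i : Fin K)
    (ℓ : ℕ → Ω → ℝ) (hmeas : ∀ n, Measurable (ℓ n))
    (hindep : iIndepFun ℓ μ)
    (hident : ∀ n, IdentDistrib (ℓ n) (ℓ 1) μ μ)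
    (hint : Integrable (ℓ 1) μ)
    (I : ℝ) (hI : I = ∫ ω, ℓ 1 ω ∂μ) (hIpos : 0 < I)
    (hmgf : ∃ ε > (0 : ℝ), ∀ θ : ℝ, |θ| ≤ ε →
      Integrable (fun ω => Real.exp (θ * ℓ 1 ω)) μ)
    (Iij : Fin K → ℝ) (hIij : ∀ j, j ≠ i → 0 < Iij j)
    (Istar : ℝ) (hIstar : Istar = sInf {y : ℝ | ∃ j, j ≠ i ∧ y = Iij j})
    (W : Fin K → ℕ → Ω → ℝ)
    (hWmeas : ∀ j n, Measurable (W j n))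
    (hsum : ∀ j, j ≠ i → ∀ ρ : ℝ, ρ < Iij j →
      Summable (fun n : ℕ => (μ {ω | W j n ω ≤ ρ * n}).toReal))
    (Y : ℕ → Ω → ℝ)
    (hY : ∀ n ω, Y n ω = (range (n + 1)).sup' nonempty_range_add_one
        (fun k => ∑ u ∈ Finset.Icc (k + 1) n, ℓ u ω))
    (τ : ℝ → ℝ → Ω → ℕ∞)
    (hτ : ∀ b h : ℝ, ∀ ω, ∀ n : ℕ, ((n : ℕ∞) < τ b h ω ↔
      ∀ m ∈ Finset.Icc 1 n, ¬ (b ≤ Y m ω ∧ ∀ j, j ≠ i → h ≤ W j m ω))) :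
    ∀ δ > (0 : ℝ), ∃ C > (0 : ℝ), ∀ b h : ℝ, 0 ≤ b → 0 ≤ h →
      (∑' n : ℕ, μ {ω | (n : ℕ∞) < τ b h ω}) ≤
        ENNReal.ofReal ((1 + δ) * max (b / I) (h / Istar) + C) := by
  intro δ hδ
  obtain ⟨ε, hε, hmgfε⟩ := hmgf
  -- Istar facts
  have hTfin : {y : ℝ | ∃ j, j ≠ i ∧ y = Iij j}.Finite := by
    apply (Set.finite_range Iij).subset
    rintro y ⟨j, _, rfl⟩; exact ⟨j, rfl⟩
  have hTne : {y : ℝ | ∃ j, j ≠ i ∧ y = Iij j}.Nonempty := by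
    obtain ⟨j, hj⟩ := Fintype.exists_ne_of_one_lt_card (by simp; omega) i
    exact ⟨Iij j, j, hj, rfl⟩
  have hmem : Istar ∈ {y : ℝ | ∃ j, j ≠ i ∧ y = Iij j} := by
    rw [hIstar]; exact hTne.csInf_mem hTfin
  have hIstarpos : 0 < Istar := by
    obtain ⟨j, hj, he⟩ := hmem; rw [he]; exact hIij j hj
  have hIstarle : ∀ j, j ≠ i → Istar ≤ Iij j := by
    intro j hj
    rw [hIstar]
    exact csInf_le hTfin.bddBelow ⟨j, hj, rfl⟩
  have h1δ : (0:ℝ) < 1 + δ := by linarith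
  set ρ : ℝ := I / (1 + δ) with hρdef
  have hρ : ρ < I := div_lt_self hIpos (by linarith)
  have hρpos : 0 < ρ := by positivity
  set ρ' : ℝ := Istar / (1 + δ) with hρ'def
  have hρ'Istar : ρ' < Istar := div_lt_self hIstarpos (by linarith)
  have hρ' : ∀ j, j ≠ i → ρ' < Iij j := fun j hj => hρ'Istar.trans_le (hIstarle j hj)
  have hρ'pos : 0 < ρ' := by positivity
  obtain ⟨c, hc, hcher⟩ := chernoff_bound μ ℓ hmeas hindep hident hint I hI hε hmgfε ρ hρ
  have hr1 : Real.exp (-c) < 1 := Real.exp_lt_one_iff.2 (by linarith)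
  have hrpos : (0:ℝ) ≤ Real.exp (-c) := (Real.exp_pos _).le
  have hgeo : Summable (fun n : ℕ => Real.exp (-c) ^ n) :=
    summable_geometric_of_lt_one hrpos hr1
  set SZ : ℝ := ∑' n : ℕ, Real.exp (-c) ^ n with hSZ
  have hSZ0 : 0 ≤ SZ := tsum_nonneg fun n => pow_nonneg hrpos n
  set SW : Fin K → ℝ := fun j => ∑' n : ℕ, (μ {ω | W j n ω ≤ ρ' * n}).toReal with hSW
  have hSW0 : ∀ j, 0 ≤ SW j := fun j => tsum_nonneg fun n => ENNReal.toReal_nonneg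
  have hSWsum : (0:ℝ) ≤ ∑ j ∈ univ.erase i, SW j := Finset.sum_nonneg fun j _ => hSW0 j
  refine ⟨2 + SZ + ∑ j ∈ univ.erase i, SW j, by linarith, fun b h hb hh => ?_⟩
  set x : ℝ := (1 + δ) * max (b / I) (h / Istar) with hx
  have hx0 : 0 ≤ x := by
    apply mul_nonneg h1δ.le
    exact le_trans (div_nonneg hb hIpos.le) (le_max_left _ _)
  set N : ℕ := ⌈x⌉₊ + 1 with hN
  have hN1 : 1 ≤ N := Nat.le_add_left 1 _
  have hxN : x ≤ N := by
    rw [hN]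
    push_cast
    linarith [Nat.le_ceil x]
  -- event bound for n ≥ N
  have hev : ∀ n : ℕ, N ≤ n → μ {ω | (n : ℕ∞) < τ b h ω} ≤
      ENNReal.ofReal (Real.exp (-(c * n))) +
        ∑ j ∈ univ.erase i, μ {ω | W j n ω ≤ ρ' * n} := by
    intro n hn
    have hn1 : 1 ≤ n := le_trans hN1 hn
    have hnx : x ≤ (n : ℝ) := hxN.trans (by exact_mod_cast hn)
    have hbn : b ≤ ρ * n := by
      have h1 : b / I ≤ max (b / I) (h / Istar) := le_max_left _ _
      have h2 : b ≤ I * max (b / I) (h / Istar) := by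
        rw [← div_le_iff₀' hIpos] at *
        exact h1
      calc b ≤ I * max (b / I) (h / Istar) := h2
        _ = I * (x / (1 + δ)) := by rw [hx]; field_simp
        _ ≤ I * ((n : ℝ) / (1 + δ)) := by gcongr
        _ = ρ * n := by rw [hρdef]; ring
    have hhn : h ≤ ρ' * n := by
      have h1 : h / Istar ≤ max (b / I) (h / Istar) := le_max_right _ _
      have h2 : h ≤ Istar * max (b / I) (h / Istar) := by
        rw [← div_le_iff₀' hIstarpos] at *
        exact h1
      calc h ≤ Istar * max (b / I) (h / Istar) := h2
        _ = Istar * (x / (1 + δ)) := by rw [hx]; field_simp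
        _ ≤ Istar * ((n : ℝ) / (1 + δ)) := by gcongr
        _ = ρ' * n := by rw [hρ'def]; ring
    have hsub : {ω | (n : ℕ∞) < τ b h ω} ⊆
        {ω | ∑ u ∈ Finset.Icc 1 n, ℓ u ω ≤ ρ * n} ∪
          ⋃ j ∈ univ.erase i, {ω | W j n ω ≤ ρ' * n} := by
      intro ω hω
      have H := (hτ b h ω n).1 hω n (Finset.mem_Icc.2 ⟨hn1, le_refl n⟩)
      push_neg at H
      by_cases hYb : b ≤ Y n ω
      · obtain ⟨j, hji, hW⟩ := H hYb
        refine Or.inr (Set.mem_iUnion₂.2 ⟨j, Finset.mem_erase.2 ⟨hji, Finset.mem_univ j⟩, ?_⟩)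
        exact Set.mem_setOf.2 (hW.le.trans hhn)
      · left
        have hZY : ∑ u ∈ Finset.Icc 1 n, ℓ u ω ≤ Y n ω := by
          rw [hY n ω]
          have h0 : (0 : ℕ) ∈ range (n + 1) := Finset.mem_range.2 (Nat.succ_pos n)
          have := Finset.le_sup' (fun k => ∑ u ∈ Finset.Icc (k + 1) n, ℓ u ω) h0
          simpa only [zero_add] using this
        exact Set.mem_setOf.2 (le_trans hZY (le_trans (not_le.1 hYb).le hbn))
    calc μ {ω | (n : ℕ∞) < τ b h ω}
        ≤ μ ({ω | ∑ u ∈ Finset.Icc 1 n, ℓ u ω ≤ ρ * n} ∪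
            ⋃ j ∈ univ.erase i, {ω | W j n ω ≤ ρ' * n}) := measure_mono hsub
      _ ≤ μ {ω | ∑ u ∈ Finset.Icc 1 n, ℓ u ω ≤ ρ * n} +
            μ (⋃ j ∈ univ.erase i, {ω | W j n ω ≤ ρ' * n}) := measure_union_le _ _
      _ ≤ ENNReal.ofReal (Real.exp (-(c * n))) +
            ∑ j ∈ univ.erase i, μ {ω | W j n ω ≤ ρ' * n} :=
          add_le_add (hcher n) (measure_biUnion_finset_le _ _)
  -- split the series
  set f : ℕ → ENNReal := fun n => μ {ω | (n : ℕ∞) < τ b h ω} with hf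
  have hsplit : ∑' n, f n = ∑ n ∈ range N, f n + ∑' n, f (n + N) :=
    (Summable.sum_add_tsum_nat_add' (f := f) (k := N) ENNReal.summable).symm
  have hhead : ∑ n ∈ range N, f n ≤ N := by
    calc ∑ n ∈ range N, f n ≤ ∑ _n ∈ range N, 1 :=
          Finset.sum_le_sum fun n _ => prob_le_one
      _ = N := by simp
  have htail : ∑' n, f (n + N) ≤ ENNReal.ofReal SZ +
      ENNReal.ofReal (∑ j ∈ univ.erase i, SW j) := by
    have h1 : ∑' n, f (n + N) ≤ ∑' n : ℕ, (ENNReal.ofReal (Real.exp (-(c * (n + N : ℕ)))) +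
        ∑ j ∈ univ.erase i, μ {ω | W j (n + N) ω ≤ ρ' * (n + N : ℕ)}) :=
      ENNReal.tsum_le_tsum fun n => hev (n + N) (Nat.le_add_left N n)
    rw [ENNReal.tsum_add] at h1
    have h2 : ∑' n : ℕ, ENNReal.ofReal (Real.exp (-(c * (n + N : ℕ)))) ≤ ENNReal.ofReal SZ := by
      have hg : ∀ m : ℕ, ENNReal.ofReal (Real.exp (-(c * m))) =
          ENNReal.ofReal (Real.exp (-c) ^ m) := by
        intro m
        rw [← Real.exp_nat_mul]
        ring_nf
      have he : ENNReal.ofReal SZ = ∑' m : ℕ, ENNReal.ofReal (Real.exp (-c) ^ m) :=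
        ENNReal.ofReal_tsum_of_nonneg (fun m => pow_nonneg hrpos m) hgeo
      calc ∑' n : ℕ, ENNReal.ofReal (Real.exp (-(c * (n + N : ℕ))))
          = ∑' n : ℕ, ENNReal.ofReal (Real.exp (-c) ^ (n + N)) := by
            exact tsum_congr fun n => hg (n + N)
        _ ≤ ∑' m : ℕ, ENNReal.ofReal (Real.exp (-c) ^ m) := by
            conv_rhs => rw [← Summable.sum_add_tsum_nat_add' (f := fun m : ℕ =>
              ENNReal.ofReal (Real.exp (-c) ^ m)) (k := N) ENNReal.summable]
            exact le_add_self
        _ = ENNReal.ofReal SZ := he.symm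
    have h3 : ∑' n : ℕ, ∑ j ∈ univ.erase i, μ {ω | W j (n + N) ω ≤ ρ' * (n + N : ℕ)} ≤
        ENNReal.ofReal (∑ j ∈ univ.erase i, SW j) := by
      rw [Summable.tsum_finsetSum fun j _ => ENNReal.summable]
      rw [ENNReal.ofReal_sum_of_nonneg fun j _ => hSW0 j]
      apply Finset.sum_le_sum
      intro j hj
      have hji : j ≠ i := (Finset.mem_erase.1 hj).1
      have hWsummable := hsum j hji ρ' (hρ' j hji)
      have heq : ENNReal.ofReal (SW j) =
          ∑' n : ℕ, μ {ω | W j n ω ≤ ρ' * n} := by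
        rw [hSW]
        rw [ENNReal.ofReal_tsum_of_nonneg (fun n => ENNReal.toReal_nonneg) hWsummable]
        exact tsum_congr fun n => ENNReal.ofReal_toReal (measure_ne_top μ _)
      rw [heq]
      conv_rhs => rw [← Summable.sum_add_tsum_nat_add' (f := fun n : ℕ =>
        μ {ω | W j n ω ≤ ρ' * n}) (k := N) ENNReal.summable]
      exact le_add_self
    exact h1.trans (add_le_add h2 h3)
  -- combine
  have hNx : (N : ℝ) ≤ x + 2 := by
    rw [hN]
    push_cast
    have := Nat.ceil_lt_add_one hx0
    linarith
  calc ∑' n, f n ≤ (N : ENNReal) + (ENNReal.ofReal SZ +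
      ENNReal.ofReal (∑ j ∈ univ.erase i, SW j)) := by
        rw [hsplit]; exact add_le_add hhead htail
    _ = ENNReal.ofReal (N : ℝ) + (ENNReal.ofReal SZ +
        ENNReal.ofReal (∑ j ∈ univ.erase i, SW j)) := by
        rw [ENNReal.ofReal_natCast]
    _ ≤ ENNReal.ofReal (x + 2) + (ENNReal.ofReal SZ +
        ENNReal.ofReal (∑ j ∈ univ.erase i, SW j)) := by
        exact add_le_add (ENNReal.ofReal_le_ofReal hNx) le_rfl
    _ = ENNReal.ofReal ((1 + δ) * max (b / I) (h / Istar) +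
        (2 + SZ + ∑ j ∈ univ.erase i, SW j)) := by
        rw [← ENNReal.ofReal_add hSZ0 hSWsum,
          ← ENNReal.ofReal_add (by linarith) (by linarith)]
        congr 1
        rw [hx]
        ring
end

section
/- For the adaptive CuSum statistic Y'_{ij}(n) = max_{R_i(n)≤k≤n} (Z_{ij}(n) − Z_{ij}(k)), where R_i(n) = max{0 ≤ t ≤ n : Y_i(t) = 0}, the recursion Y'_{ij}(n) = (Y'_{ij}(n−1) + ℓ_{ij}(n))⁺ · 1{Y_i(n) > 0} holds for all n ≥ 1, with Y'_{ij}(0) = 0. -/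
open Finset

theorem stmt_14 (ℓi ℓij : ℕ → ℝ)
    (Zi Zij : ℕ → ℝ)
    (hZi : ∀ n, Zi n = ∑ u ∈ Finset.Icc 1 n, ℓi u)
    (hZij : ∀ n, Zij n = ∑ u ∈ Finset.Icc 1 n, ℓij u)
    (Y : ℕ → ℝ)
    (hY : ∀ n, Y n = (range (n + 1)).sup' nonempty_range_add_one (fun k => Zi n - Zi k))
    (R : ℕ → ℕ)
    (hR : ∀ n, R n ≤ n ∧ Y (R n) = 0 ∧ ∀ t ≤ n, Y t = 0 → t ≤ R n)
    (Y' : ℕ → ℝ)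
    (hY' : ∀ n, Y' n = (Finset.Icc (R n) n).sup'
        (Finset.nonempty_Icc.mpr (hR n).1) (fun k => Zij n - Zij k)) :
    Y' 0 = 0 ∧ ∀ n : ℕ, 1 ≤ n →
      Y' n = max (Y' (n - 1) + ℓij n) 0 * (if 0 < Y n then (1 : ℝ) else 0) := by
  have hYnonneg : ∀ n, 0 ≤ Y n := by
    intro n
    rw [hY n]
    have := Finset.le_sup' (fun k => Zi n - Zi k) (Finset.self_mem_range_succ n)
    simpa only [sub_self] using this
  constructor
  · rw [hY' 0]
    apply le_antisymm
    · apply Finset.sup'_le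
      intro k hk
      have hk0 : k = 0 := Nat.le_zero.mp (Finset.mem_Icc.mp hk).2
      simp [hk0]
    · have h0 : 0 ∈ Finset.Icc (R 0) 0 := Finset.mem_Icc.mpr ⟨(hR 0).1, le_rfl⟩
      have := Finset.le_sup' (fun k => Zij 0 - Zij k) h0
      simpa only [sub_self] using this
  · intro n hn
    obtain ⟨m, rfl⟩ : ∃ m, n = m + 1 := ⟨n - 1, by omega⟩
    have hZstep : Zij (m + 1) = Zij m + ℓij (m + 1) := by
      rw [hZij, hZij, Finset.sum_Icc_succ_top (by omega)]
    by_cases h : 0 < Y (m + 1)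
    · have h1 : R (m + 1) ≤ m := by
        have h2 := (hR (m + 1)).1
        rcases Nat.lt_or_ge (R (m + 1)) (m + 1) with h' | h'
        · omega
        · exfalso
          have he : R (m + 1) = m + 1 := le_antisymm h2 h'
          have := (hR (m + 1)).2.1
          rw [he] at this
          exact absurd this (ne_of_gt h)
      have hRm : R (m + 1) = R m :=
        le_antisymm ((hR m).2.2 _ h1 (hR (m + 1)).2.1)
          ((hR (m + 1)).2.2 (R m) (by have := (hR m).1; omega) (hR m).2.1)
      have hIcc : Finset.Icc (R (m + 1)) (m + 1) = insert (m + 1) (Finset.Icc (R m) m) := by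
        have := (hR m).1
        ext x
        simp only [Finset.mem_Icc, Finset.mem_insert]
        omega
      have hne : (Finset.Icc (R m) m).Nonempty := Finset.nonempty_Icc.mpr (hR m).1
      rw [hY' (m + 1), if_pos h, mul_one]
      simp only [Nat.add_sub_cancel]
      calc (Finset.Icc (R (m + 1)) (m + 1)).sup'
            (Finset.nonempty_Icc.mpr (hR (m + 1)).1) (fun k => Zij (m + 1) - Zij k)
          = (insert (m + 1) (Finset.Icc (R m) m)).sup' (Finset.insert_nonempty _ _)
            (fun k => Zij (m + 1) - Zij k) :=
            Finset.sup'_congr _ hIcc (fun _ _ => rfl)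
        _ = (Zij (m + 1) - Zij (m + 1)) ⊔ (Finset.Icc (R m) m).sup' hne
            (fun k => Zij (m + 1) - Zij k) := Finset.sup'_insert hne _
        _ = 0 ⊔ (Finset.Icc (R m) m).sup' hne
            (fun k => (Zij m - Zij k) + ℓij (m + 1)) := by
            rw [sub_self]
            congr 1
            exact Finset.sup'_congr hne rfl (fun k _ => by rw [hZstep]; ring)
        _ = 0 ⊔ (Y' m + ℓij (m + 1)) := by
            rw [← Finset.sup'_add _ (fun k => Zij m - Zij k) (ℓij (m + 1)) hne, ← hY' m]
        _ = max (Y' m + ℓij (m + 1)) 0 := max_comm 0 _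
    · have hY0 : Y (m + 1) = 0 := le_antisymm (not_lt.mp h) (hYnonneg _)
      have hRe : R (m + 1) = m + 1 :=
        le_antisymm (hR (m + 1)).1 ((hR (m + 1)).2.2 (m + 1) le_rfl hY0)
      rw [hY' (m + 1), if_neg h, mul_zero]
      simp [hRe]
end

section
/- Let A(ν) = ν − R(ν) be the age at time ν of a discrete renewal process whose inter-event times η are i.i.d. with P(η > n) ≤ e^{−an} for all n, where a > 0. Then for every θ ∈ (0, a), there is a constant K_θ > 0, not depending on ν, x, or δ, such that P(ν − R(ν) ≥ δx) ≤ K_θ e^{−θδx} for all x, δ > 0 and all ν ∈ ℕ. -/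
open MeasureTheory ProbabilityTheory Finset
open scoped ENNReal

theorem stmt_17 {Ω : Type*} [MeasurableSpace Ω] (μ : Measure Ω) [IsProbabilityMeasure μ]
    (η : ℕ → Ω → ℕ) (hmeas : ∀ k, Measurable (η k))
    (hindep : iIndepFun η μ)
    (hident : ∀ k, IdentDistrib (η k) (η 0) μ μ)
    (hpos : ∀ k ω, 1 ≤ η k ω)
    (a : ℝ) (ha : 0 < a)
    (htail : ∀ n : ℕ, (μ {ω | n < η 0 ω}).toReal ≤ Real.exp (-(a * n)))
    (S : ℕ → Ω → ℕ) (hS0 : ∀ ω, S 0 ω = 0)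
    (hS : ∀ k ω, S (k + 1) ω = S k ω + η k ω)
    (R : ℕ → Ω → ℕ)
    (hR : ∀ ν ω, R ν ω = sSup {m : ℕ | m ≤ ν ∧ ∃ k, S k ω = m}) :
    ∀ θ : ℝ, 0 < θ → θ < a → ∃ Kθ > (0 : ℝ), ∀ x δ : ℝ, 0 < x → 0 < δ → ∀ ν : ℕ,
      (μ {ω | δ * x ≤ ((ν : ℝ) - R ν ω)}).toReal ≤ Kθ * Real.exp (-(θ * δ * x)) := by
  intro θ hθ hθa
  set r : ℝ := Real.exp (-a) with hrdef
  have hr0 : 0 < r := Real.exp_pos _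
  have hr1 : r < 1 := by
    rw [hrdef, ← Real.exp_zero]
    exact Real.exp_lt_exp.mpr (by linarith)
  have h1r : (0:ℝ) < 1 - r := by linarith
  refine ⟨1 / (1 - r), by positivity, ?_⟩
  intro x δ hx hδ ν
  set t : ℝ := δ * x with htdef
  have ht0 : 0 < t := mul_pos hδ hx
  have hExpPos : (0:ℝ) < Real.exp (-(θ * δ * x)) := Real.exp_pos _
  -- basic facts about S
  have hSsum : ∀ k, S k = ∑ j ∈ range k, η j := by
    intro k
    induction k with
    | zero => funext ω; simp [hS0 ω]
    | succ k ih =>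
      funext ω
      rw [hS k ω, ih]
      simp [Finset.sum_apply, Finset.sum_range_succ]
  have hSmeas : ∀ k, Measurable (S k) := by
    intro k
    induction k with
    | zero =>
      have h0 : S 0 = fun _ => 0 := funext hS0
      rw [h0]; exact measurable_const
    | succ k ih =>
      have h1 : S (k+1) = fun ω => S k ω + η k ω := funext (hS k)
      rw [h1]; exact ih.add (hmeas k)
  have hSmono : ∀ ω, StrictMono (fun k => S k ω) := by
    intro ω
    apply strictMono_nat_of_lt_succ
    intro k
    have := hpos k ω
    simp only [hS k ω]; omega
  have hkS : ∀ k ω, k ≤ S k ω := by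
    intro k ω
    induction k with
    | zero => omega
    | succ k ih => have := hpos k ω; rw [hS k ω]; omega
  -- facts about R ν ω
  have hRfact : ∀ ω, R ν ω ≤ ν ∧ ∃ k, k ≤ R ν ω ∧ S k ω = R ν ω ∧ ν < S (k+1) ω := by
    intro ω
    set M : Set ℕ := {m : ℕ | m ≤ ν ∧ ∃ k, S k ω = m} with hM
    have h0M : 0 ∈ M := ⟨Nat.zero_le ν, 0, hS0 ω⟩
    have hbdd : BddAbove M := ⟨ν, fun m hm => hm.1⟩
    have hmem : R ν ω ∈ M := by rw [hR ν ω]; exact Nat.sSup_mem ⟨0, h0M⟩ hbdd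
    obtain ⟨hmν, k, hk⟩ := hmem
    refine ⟨hmν, k, by rw [← hk]; exact hkS k ω, hk, ?_⟩
    by_contra h'
    push_neg at h'
    have hmem' : S (k+1) ω ∈ M := ⟨h', k+1, rfl⟩
    have hle : S (k+1) ω ≤ R ν ω := by rw [hR ν ω]; exact le_csSup hbdd hmem'
    have := hpos k ω
    rw [hS k ω, hk] at hle
    omega
  by_cases hcase : t ≤ (ν : ℝ)
  · -- main case
    set c : ℕ := ⌈t⌉₊ with hcdef
    have hc1 : 1 ≤ c := Nat.one_le_ceil_iff.mpr ht0
    have hcν : c ≤ ν := Nat.ceil_le.mpr (by exact_mod_cast hcase)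
    have hct : t ≤ (c : ℝ) := Nat.le_ceil t
    set n : ℕ := ν - c with hndef
    set E : ℕ → ℕ → Set Ω := fun k s => (S k ⁻¹' {s}) ∩ (η k ⁻¹' Set.Ioi (ν - s)) with hE
    -- inclusion
    have hincl : {ω | δ * x ≤ ((ν : ℝ) - R ν ω)} ⊆
        ⋃ s ∈ range (n+1), ⋃ k ∈ range (s+1), E k s := by
      intro ω hω
      simp only [Set.mem_setOf_eq] at hω
      obtain ⟨hmν, k, hkm, hkS', hkν⟩ := hRfact ω
      have hmn : R ν ω ≤ n := by
        have h1 : t ≤ ((ν - R ν ω : ℕ) : ℝ) := by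
          rw [Nat.cast_sub hmν]; exact hω
        have h2 : c ≤ ν - R ν ω := Nat.ceil_le.mpr h1
        omega
      have hs1 : R ν ω ∈ range (n+1) := Finset.mem_range.mpr (by omega)
      have hs2 : k ∈ range (R ν ω + 1) := Finset.mem_range.mpr (by omega)
      refine Set.mem_biUnion hs1 (Set.mem_biUnion hs2 ?_)
      refine ⟨hkS', ?_⟩
      simp only [Set.mem_preimage, Set.mem_Ioi]
      have := hS k ω
      omega
    -- measure of each piece
    have hterm : ∀ s, s ≤ n → ∀ k, (μ (E k s)).toReal ≤
        (μ (S k ⁻¹' {s})).toReal * (r ^ c * r ^ (n - s)) := by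
      intro s hsn k
      have hind : IndepFun (S k) (η k) μ := by
        rw [hSsum k]
        exact hindep.indepFun_sum_range_succ hmeas k
      have hmul : μ (E k s) = μ (S k ⁻¹' {s}) * μ (η k ⁻¹' Set.Ioi (ν - s)) :=
        hind.measure_inter_preimage_eq_mul _ _ (measurableSet_singleton s) measurableSet_Ioi
      rw [hmul, ENNReal.toReal_mul]
      have hident' : μ (η k ⁻¹' Set.Ioi (ν - s)) = μ (η 0 ⁻¹' Set.Ioi (ν - s)) :=
        (hident k).measure_mem_eq measurableSet_Ioi
      have htail' : (μ (η k ⁻¹' Set.Ioi (ν - s))).toReal ≤ r ^ c * r ^ (n - s) := by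
        rw [hident']
        have h1 : (μ (η 0 ⁻¹' Set.Ioi (ν - s))).toReal ≤ Real.exp (-(a * (ν - s : ℕ))) :=
          htail (ν - s)
        refine h1.trans ?_
        have h2 : Real.exp (-(a * ((ν - s : ℕ) : ℝ))) = r ^ (ν - s) := by
          rw [hrdef, ← Real.exp_nat_mul]; ring_nf
        rw [h2]
        have h3 : ν - s = c + (n - s) := by omega
        rw [h3, pow_add]
      exact mul_le_mul_of_nonneg_left htail' ENNReal.toReal_nonneg
    -- disjointness sum ≤ 1
    have hdisjsum : ∀ s, ∑ k ∈ range (s+1), (μ (S k ⁻¹' {s})).toReal ≤ 1 := by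
      intro s
      have hdisj : (range (s+1) : Set ℕ).PairwiseDisjoint (fun k => S k ⁻¹' {s}) := by
        intro i _ j _ hij
        refine Set.disjoint_left.mpr fun ω hi hj => ?_
        have : S i ω ≠ S j ω := fun h => hij ((hSmono ω).injective h)
        simp only [Set.mem_preimage, Set.mem_singleton_iff] at hi hj
        exact this (hi.trans hj.symm)
      have hsum : ∑ k ∈ range (s+1), μ (S k ⁻¹' {s}) =
          μ (⋃ k ∈ range (s+1), S k ⁻¹' {s}) :=
        (measure_biUnion_finset hdisj fun k _ => (hSmeas k) (measurableSet_singleton s)).symm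
      calc ∑ k ∈ range (s+1), (μ (S k ⁻¹' {s})).toReal
          = (∑ k ∈ range (s+1), μ (S k ⁻¹' {s})).toReal :=
            (ENNReal.toReal_sum fun k _ => measure_ne_top μ _).symm
        _ ≤ (1 : ℝ≥0∞).toReal := by
            apply ENNReal.toReal_mono ENNReal.one_ne_top
            rw [hsum]; exact prob_le_one
        _ = 1 := by simp
    -- put together
    have hmain : (μ {ω | δ * x ≤ ((ν : ℝ) - R ν ω)}).toReal ≤
        ∑ s ∈ range (n+1), ∑ k ∈ range (s+1), (μ (E k s)).toReal := by
      have h1 : μ {ω | δ * x ≤ ((ν : ℝ) - R ν ω)} ≤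
          ∑ s ∈ range (n+1), ∑ k ∈ range (s+1), μ (E k s) := by
        refine (measure_mono hincl).trans ?_
        refine (measure_biUnion_finset_le _ _).trans ?_
        exact Finset.sum_le_sum fun s _ => measure_biUnion_finset_le _ _
      calc (μ {ω | δ * x ≤ ((ν : ℝ) - R ν ω)}).toReal
          ≤ (∑ s ∈ range (n+1), ∑ k ∈ range (s+1), μ (E k s)).toReal := by
            apply ENNReal.toReal_mono _ h1
            exact (ENNReal.sum_lt_top.mpr fun s _ =>
              ENNReal.sum_lt_top.mpr fun k _ => measure_lt_top μ _).ne
        _ = ∑ s ∈ range (n+1), ∑ k ∈ range (s+1), (μ (E k s)).toReal := by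
            rw [ENNReal.toReal_sum fun s _ =>
              (ENNReal.sum_lt_top.mpr fun k _ => measure_lt_top μ _).ne]
            exact Finset.sum_congr rfl fun s _ =>
              ENNReal.toReal_sum fun k _ => measure_ne_top μ _
    have hfinal : ∑ s ∈ range (n+1), ∑ k ∈ range (s+1), (μ (E k s)).toReal ≤
        r ^ c * (1 / (1 - r)) := by
      have h2 : ∀ s ∈ range (n+1), ∑ k ∈ range (s+1), (μ (E k s)).toReal ≤
          r ^ c * r ^ (n - s) := by
        intro s hs
        have hsn : s ≤ n := by have := Finset.mem_range.mp hs; omega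
        calc ∑ k ∈ range (s+1), (μ (E k s)).toReal
            ≤ ∑ k ∈ range (s+1), (μ (S k ⁻¹' {s})).toReal * (r ^ c * r ^ (n - s)) :=
              Finset.sum_le_sum fun k _ => hterm s hsn k
          _ = (∑ k ∈ range (s+1), (μ (S k ⁻¹' {s})).toReal) * (r ^ c * r ^ (n - s)) :=
              (Finset.sum_mul _ _ _).symm
          _ ≤ 1 * (r ^ c * r ^ (n - s)) := by
              apply mul_le_mul_of_nonneg_right (hdisjsum s)
              positivity
          _ = r ^ c * r ^ (n - s) := one_mul _
      calc ∑ s ∈ range (n+1), ∑ k ∈ range (s+1), (μ (E k s)).toReal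
          ≤ ∑ s ∈ range (n+1), r ^ c * r ^ (n - s) := Finset.sum_le_sum h2
        _ = r ^ c * ∑ s ∈ range (n+1), r ^ (n - s) := by rw [Finset.mul_sum]
        _ = r ^ c * ∑ s ∈ range (n+1), r ^ s := by
            congr 1
            rw [← Finset.sum_range_reflect]
            apply Finset.sum_congr rfl
            intro i hi
            simp only [Finset.mem_range] at hi
            congr 1
            omega
        _ ≤ r ^ c * (1 / (1 - r)) := by
            apply mul_le_mul_of_nonneg_left _ (pow_nonneg hr0.le _)
            have h := geom_sum_eq (ne_of_lt hr1) (n+1)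
            rw [h]
            have heq : (r ^ (n+1) - 1) / (r - 1) = (1 - r ^ (n+1)) / (1 - r) := by
              rw [← neg_div_neg_eq]; ring_nf
            rw [heq]
            gcongr <;> nlinarith [pow_nonneg hr0.le (n+1)]
    have hrc : r ^ c ≤ Real.exp (-(θ * δ * x)) := by
      have h4 : r ^ c = Real.exp (-(a * c)) := by
        rw [hrdef, ← Real.exp_nat_mul]; ring_nf
      rw [h4]
      apply Real.exp_le_exp.mpr
      have h1 : θ * t ≤ a * t := by nlinarith
      have h2 : a * t ≤ a * c := by nlinarith
      have h5 : θ * δ * x = θ * t := by rw [htdef]; ring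
      rw [h5]; linarith
    calc (μ {ω | δ * x ≤ ((ν : ℝ) - R ν ω)}).toReal
        ≤ r ^ c * (1 / (1 - r)) := hmain.trans hfinal
      _ ≤ Real.exp (-(θ * δ * x)) * (1 / (1 - r)) := by
          apply mul_le_mul_of_nonneg_right hrc
          positivity
      _ = 1 / (1 - r) * Real.exp (-(θ * δ * x)) := by ring
  · -- t > ν: event is empty
    push_neg at hcase
    have hempty : {ω | δ * x ≤ ((ν : ℝ) - R ν ω)} = ∅ := by
      ext ω
      simp only [Set.mem_setOf_eq, Set.mem_empty_iff_false, iff_false, not_le]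
      have h6 : (0:ℝ) ≤ (R ν ω : ℝ) := Nat.cast_nonneg _
      calc ((ν : ℝ) - R ν ω) ≤ (ν : ℝ) := by linarith
        _ < t := hcase
    rw [hempty]
    simp only [measure_empty, ENNReal.toReal_zero]
    positivity
end
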